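/- arXiv:1510.02720 — 2 statements merged into one kernel-verified Lean document; each statement's English description precedes it below -/
import Mathlib

section
/- The function Φ : R → D_m defined by Φ(p) being the 2^n × 2^n diagonal matrix with diagonal entries ω_m^{p(b)} for b ∈ {0,1}^n is a group isomorphism from the additive group R to the multiplicative group D_m. -/
open scoped Matrix

/-- Evaluation of a multilinear polynomial over `ℤ_m` (coefficients indexed by
multi-indices `α ∈ {0,1}ⁿ`, identified with subsets of `[n]`) at a bit string
`b ∈ {0,1}ⁿ`, using `x_j² = x_j`. -/
noncomputable def evalP (n m : ℕ) (p : Finset (Fin n) → ZMod m)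
    (b : Fin n → ZMod 2) : ZMod m :=
  ∑ α : Finset (Fin n), p α * ∏ j ∈ α, ((b j).val : ZMod m)

/-- `Φ(p)` is the `2ⁿ × 2ⁿ` diagonal matrix with diagonal entries
`ω_m^{p(b)}`, `b ∈ {0,1}ⁿ`, where `ω_m = e^{2πi/m}`. -/
noncomputable def Phi (n m : ℕ) (p : Finset (Fin n) → ZMod m) :
    Matrix (Fin n → ZMod 2) (Fin n → ZMod 2) ℂ :=
  Matrix.diagonal fun b =>
    Complex.exp (2 * Real.pi * Complex.I / m) ^ (evalP n m p b).val

/-- The group `D_m` of `2ⁿ × 2ⁿ` diagonal unitary matrices whose diagonal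
entries are `m`-th roots of unity. -/
def Dm (n m : ℕ) : Set (Matrix (Fin n → ZMod 2) (Fin n → ZMod 2) ℂ) :=
  {D | ∃ d : (Fin n → ZMod 2) → ℂ, D = Matrix.diagonal d ∧ ∀ b, d b ^ m = 1}

lemma evalP_indicator (n m : ℕ) (p : Finset (Fin n) → ZMod m) (S : Finset (Fin n)) :
    evalP n m p (fun j => if j ∈ S then 1 else 0) = ∑ α ∈ S.powerset, p α := by
  unfold evalP
  have h : ∀ α : Finset (Fin n),
      (∏ j ∈ α, ((((if j ∈ S then (1 : ZMod 2) else 0)).val : ZMod m))) =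
      if α ⊆ S then 1 else 0 := by
    intro α
    by_cases hα : α ⊆ S
    · rw [if_pos hα]
      apply Finset.prod_eq_one
      intro j hj
      rw [if_pos (hα hj), show ((1 : ZMod 2)).val = 1 from rfl, Nat.cast_one]
    · rw [if_neg hα]
      obtain ⟨j, hjα, hjS⟩ := Finset.not_subset.mp hα
      apply Finset.prod_eq_zero hjα
      rw [if_neg hjS, show ((0 : ZMod 2)).val = 0 from rfl, Nat.cast_zero]
  simp only [h, mul_ite, mul_one, mul_zero]
  rw [← Finset.sum_filter]
  congr 1
  ext α
  simp [Finset.mem_powerset]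

lemma indicator_eq (n : ℕ) (b : Fin n → ZMod 2) :
    (fun j => if j ∈ Finset.univ.filter (fun j => b j = 1) then (1 : ZMod 2) else 0) = b := by
  funext j
  have h : ∀ x : ZMod 2, x = 0 ∨ x = 1 := by decide
  rcases h (b j) with h' | h' <;> simp [h']

lemma powerset_sum_zero (n m : ℕ) (r : Finset (Fin n) → ZMod m)
    (h : ∀ S : Finset (Fin n), ∑ α ∈ S.powerset, r α = 0) : r = 0 := by
  funext s
  induction s using Finset.strongInduction with
  | _ s ih =>
    have hs := h s
    rw [← Finset.add_sum_erase _ _ (Finset.mem_powerset_self s)] at hs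
    have hz : ∑ t ∈ (s.powerset).erase s, r t = 0 := by
      apply Finset.sum_eq_zero
      intro t ht
      obtain ⟨hne, hsub⟩ := Finset.mem_erase.mp ht
      exact ih t (Finset.ssubset_iff_subset_ne.mpr ⟨Finset.mem_powerset.mp hsub, hne⟩)
    rw [hz, add_zero] at hs
    exact hs

lemma evalP_add (n m : ℕ) (p q : Finset (Fin n) → ZMod m) (b : Fin n → ZMod 2) :
    evalP n m (p + q) b = evalP n m p b + evalP n m q b := by
  unfold evalP
  rw [← Finset.sum_add_distrib]
  exact Finset.sum_congr rfl fun α _ => by rw [Pi.add_apply, add_mul]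

lemma evalP_injective (n m : ℕ) : Function.Injective (fun p => evalP n m p) := by
  intro p q h
  have hsub : p - q = 0 := by
    apply powerset_sum_zero
    intro S
    have h1 : evalP n m p (fun j => if j ∈ S then 1 else 0)
        = evalP n m q (fun j => if j ∈ S then 1 else 0) := congrFun h _
    rw [evalP_indicator, evalP_indicator] at h1
    calc ∑ α ∈ S.powerset, (p - q) α
        = ∑ α ∈ S.powerset, p α - ∑ α ∈ S.powerset, q α := by
          rw [← Finset.sum_sub_distrib]; rfl
      _ = 0 := by rw [h1, sub_self]
  have := sub_eq_zero.mp hsub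
  exact this

lemma evalP_bijective (n m : ℕ) [NeZero m] :
    Function.Bijective (fun p => evalP n m p) := by
  rw [Fintype.bijective_iff_injective_and_card]
  refine ⟨evalP_injective n m, ?_⟩
  simp [Fintype.card_fun, Fintype.card_finset]

/-- `Φ` is a group isomorphism from the additive group `R` of multilinear
polynomials over `ℤ_m` to the multiplicative group `D_m` of diagonal matrices
with `m`-th-root-of-unity entries: it is a homomorphism (taking addition to
matrix multiplication), injective, and its range is exactly `D_m`. -/
theorem Phi_group_isomorphism (n m : ℕ) (hm : 0 < m) :
    (∀ p q : Finset (Fin n) → ZMod m,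
        Phi n m (p + q) = Phi n m p * Phi n m q) ∧
    Function.Injective (Phi n m) ∧
    Set.range (Phi n m) = Dm n m := by
  haveI : NeZero m := ⟨hm.ne'⟩
  have hprim : IsPrimitiveRoot (Complex.exp (2 * Real.pi * Complex.I / m)) m :=
    Complex.isPrimitiveRoot_exp m hm.ne'
  have hone : Complex.exp (2 * Real.pi * Complex.I / m) ^ m = 1 := hprim.pow_eq_one
  have hmod : ∀ x : ℕ, Complex.exp (2 * Real.pi * Complex.I / m) ^ (x % m)
      = Complex.exp (2 * Real.pi * Complex.I / m) ^ x := by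
    intro x
    conv_rhs => rw [← Nat.div_add_mod x m]
    rw [pow_add, pow_mul, hone, one_pow, one_mul]
  refine ⟨?_, ?_, ?_⟩
  · intro p q
    unfold Phi
    rw [Matrix.diagonal_mul_diagonal]
    apply congrArg Matrix.diagonal
    funext b
    rw [evalP_add, ZMod.val_add, hmod, pow_add]
  · intro p q h
    apply evalP_injective n m
    funext b
    have hb : (Phi n m p) b b = (Phi n m q) b b := by rw [h]
    unfold Phi at hb
    rw [Matrix.diagonal_apply_eq, Matrix.diagonal_apply_eq] at hb
    have := hprim.pow_inj (ZMod.val_lt _) (ZMod.val_lt _) hb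
    exact ZMod.val_injective m this
  · ext D
    constructor
    · rintro ⟨p, rfl⟩
      exact ⟨_, rfl, fun b => by
        rw [← pow_mul, mul_comm ((evalP n m p b).val) m, pow_mul, hone, one_pow]⟩
    · rintro ⟨d, rfl, hd⟩
      have hchoice : ∀ b, ∃ i < m, Complex.exp (2 * Real.pi * Complex.I / m) ^ i = d b := fun b =>
        hprim.eq_pow_of_pow_eq_one (hd b)
      choose k hk hωk using hchoice
      obtain ⟨p, hp⟩ := (evalP_bijective n m).2 (fun b => (k b : ZMod m))
      simp only at hp
      refine ⟨p, ?_⟩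
      unfold Phi
      apply congrArg Matrix.diagonal
      funext b
      have : evalP n m p b = (k b : ZMod m) := congrFun hp b
      rw [this, ZMod.val_natCast, Nat.mod_eq_of_lt (hk b), hωk]
end

section
/- Under the conjugation action of the n-qubit CNOT group cX = ⟨Λ_{ij}(X)⟩ on the Pauli group P/⟨i⟩ (n ≥ 2), there are exactly 5 orbits, with representatives I, X(1), Z(1), Y(1), Y(1)Y(2), of sizes 1, 2^n−1, 2^n−1, 2^{n−1}(2^n−1), and 4^n/2 − 3·2^{n−1} + 1 respectively. -/
open scoped Matrix

/-- The action of `B ∈ GL_n(𝔽₂)` on the Pauli group mod phases, identified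
with pairs `(u,v) ∈ 𝔽₂ⁿ × 𝔽₂ⁿ` via `X(u)Z(v)`: `(u,v) ↦ (Bu, (Bᵀ)⁻¹ v)`.
This is the conjugation action of the CNOT group `cX = ⟨Λ_{ij}(X)⟩ ≅ GL_n(𝔽₂)`. -/
noncomputable def cxAct (n : ℕ) (g : GL (Fin n) (ZMod 2))
    (p : (Fin n → ZMod 2) × (Fin n → ZMod 2)) :
    (Fin n → ZMod 2) × (Fin n → ZMod 2) :=
  ((g : Matrix (Fin n) (Fin n) (ZMod 2)).mulVec p.1,
   ((g⁻¹ : GL (Fin n) (ZMod 2)) : Matrix (Fin n) (Fin n) (ZMod 2))ᵀ.mulVec p.2)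

/-- The orbit of a Pauli `(u,v)` under the conjugation action of the CNOT group. -/
noncomputable def cxOrbit (n : ℕ) (p : (Fin n → ZMod 2) × (Fin n → ZMod 2)) :
    Set ((Fin n → ZMod 2) × (Fin n → ZMod 2)) :=
  {q | ∃ g : GL (Fin n) (ZMod 2), q = cxAct n g p}

/-!
The invariants `u = 0`, `v = 0` and `u ⬝ᵥ v` of `(u, v)` are preserved, because
`(B u) ⬝ᵥ (B⁻ᵀ v) = u ⬝ᵥ v`. Conversely, if the columns of `B` form a basis `b`, then `B eⱼ = bⱼ`,
and `B⁻ᵀ y = v` exactly when `v ⬝ᵥ bⱼ = yⱼ` for all `j`. So a pair `(u, v)` with `v ≠ 0` is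
reached from a representative by taking for `b` a vector `w` with `v ⬝ᵥ w = 1` followed by a
basis of the hyperplane `v⊥`; when `u ⬝ᵥ v = 1` one takes `w = u`, and when `u ∈ v⊥` is nonzero
the basis of `v⊥` may start with `u`, which needs `n ≥ 2`. The orbit sizes follow from counting
`2ⁿ⁻¹` vectors `v` in each coset of `u⊥`, for each `u ≠ 0`.
-/

open Module Matrix Finset

section Basis

variable {K M : Type*} [Field K] [AddCommGroup M] [Module K M]

noncomputable def Module.Basis.consKer {m : ℕ} (φ : Dual K M) {w : M} (hw : φ w = 1)
    (d : Basis (Fin m) K (LinearMap.ker φ)) : Basis (Fin (m + 1)) K M :=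
  .mkFinCons w d (fun c x hx h => by simpa [LinearMap.mem_ker.mp hx, hw] using congrArg φ h)
    (fun z => ⟨-φ z, by simp [hw]⟩)

namespace Module.Basis

variable {m : ℕ} (φ : Dual K M) {w : M} (hw : φ w = 1) (d : Basis (Fin m) K (LinearMap.ker φ))

@[simp] lemma consKer_zero : consKer φ hw d 0 = w := by simp [consKer]

@[simp] lemma consKer_succ (i : Fin m) : consKer φ hw d i.succ = d i := by simp [consKer]

lemma apply_consKer (j : Fin (m + 1)) :
    φ (consKer φ hw d j) = (Pi.single 0 1 : Fin (m + 1) → K) j := by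
  cases j using Fin.cases with
  | zero => simp [hw]
  | succ i => simp [Fin.succ_ne_zero]

end Module.Basis

namespace Module

variable [FiniteDimensional K M] {m : ℕ}

lemma Dual.finrank_ker_of_apply_eq_one (hM : finrank K M = m + 1) {φ : Dual K M} {w : M}
    (hw : φ w = 1) : finrank K (LinearMap.ker φ) = m := by
  have := finrank_ker_add_one_of_ne_zero (f := φ) fun h => by simp [h] at hw
  omega

lemma exists_basis_apply_zero_eq_of_apply_eq_one (hM : finrank K M = m + 1) {φ : Dual K M}
    {w : M} (hw : φ w = 1) :
    ∃ b : Basis (Fin (m + 1)) K M,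
      b 0 = w ∧ ∀ j, φ (b j) = (Pi.single 0 1 : Fin (m + 1) → K) j :=
  ⟨.consKer φ hw (finBasisOfFinrankEq K _ (Dual.finrank_ker_of_apply_eq_one hM hw)), by simp,
    Basis.apply_consKer φ hw _⟩

lemma exists_basis_apply_zero_eq (hM : finrank K M = m + 1) {x : M} (hx : x ≠ 0) :
    ∃ b : Basis (Fin (m + 1)) K M, b 0 = x := by
  obtain ⟨φ, hφ⟩ := exists_dual_forall_apply_eq_one (LinearIndepOn.singleton (R := K) (v := id) hx)
  obtain ⟨b, hb, -⟩ := exists_basis_apply_zero_eq_of_apply_eq_one hM (hφ x rfl)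
  exact ⟨b, hb⟩

lemma exists_basis_apply_zero_eq_apply_one_eq (hM : finrank K M = m + 2) {φ : Dual K M}
    {w u : M} (hw : φ w = 1) (hu : φ u = 0) (hu₀ : u ≠ 0) :
    ∃ b : Basis (Fin (m + 2)) K M,
      b 0 = w ∧ b 1 = u ∧ ∀ j, φ (b j) = (Pi.single 0 1 : Fin (m + 2) → K) j := by
  obtain ⟨d, hd⟩ := exists_basis_apply_zero_eq (Dual.finrank_ker_of_apply_eq_one hM hw)
    (x := ⟨u, hu⟩) (by simpa [Subtype.ext_iff] using hu₀)
  refine ⟨.consKer φ hw d, by simp, ?_, Basis.apply_consKer φ hw d⟩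
  rw [← Fin.succ_zero_eq_one, Basis.consKer_succ, hd]

end Module

end Basis

section GeneralLinear

variable {K ι : Type*} [CommRing K] [Fintype ι] [DecidableEq ι]

namespace Module.Basis

noncomputable def toGL (b : Basis ι K (ι → K)) : GL ι K :=
  letI := (Pi.basisFun K ι).invertibleToMatrix b
  unitOfInvertible ((Pi.basisFun K ι).toMatrix b)

lemma toGL_mulVec (b : Basis ι K (ι → K)) (x : ι → K) :
    (b.toGL : Matrix ι ι K) *ᵥ x = ∑ j, x j • b j := by
  ext i
  simp [toGL, mulVec, dotProduct, Basis.toMatrix_apply, Finset.sum_apply, mul_comm]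

lemma transpose_toGL_mulVec (b : Basis ι K (ι → K)) (v : ι → K) :
    (b.toGL : Matrix ι ι K)ᵀ *ᵥ v = fun j => v ⬝ᵥ b j := by
  ext j
  simp [toGL, mulVec, dotProduct, Basis.toMatrix_apply, mul_comm]

end Module.Basis

namespace Matrix.GeneralLinearGroup

variable (g : GL ι K)

lemma inv_transpose_mulVec_eq_iff (z v : ι → K) :
    ((g⁻¹ : GL ι K) : Matrix ι ι K)ᵀ *ᵥ z = v ↔ (g : Matrix ι ι K)ᵀ *ᵥ v = z := by
  have h₁ : ((g⁻¹ : GL ι K) : Matrix ι ι K)ᵀ * (g : Matrix ι ι K)ᵀ = 1 := by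
    rw [← transpose_mul, g.mul_inv, transpose_one]
  have h₂ : (g : Matrix ι ι K)ᵀ * ((g⁻¹ : GL ι K) : Matrix ι ι K)ᵀ = 1 := by
    rw [← transpose_mul, g.inv_mul, transpose_one]
  constructor
  · rintro rfl
    rw [mulVec_mulVec, h₂, one_mulVec]
  · rintro rfl
    rw [mulVec_mulVec, h₁, one_mulVec]

lemma mulVec_eq_zero_iff {x : ι → K} : (g : Matrix ι ι K) *ᵥ x = 0 ↔ x = 0 := by
  refine ⟨fun h => ?_, fun h => by rw [h, mulVec_zero]⟩
  simpa [mulVec_mulVec, g.inv_mul] using congrArg (((g⁻¹ : GL ι K) : Matrix ι ι K) *ᵥ ·) h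

lemma inv_transpose_mulVec_eq_zero_iff {z : ι → K} :
    ((g⁻¹ : GL ι K) : Matrix ι ι K)ᵀ *ᵥ z = 0 ↔ z = 0 := by
  rw [inv_transpose_mulVec_eq_iff, mulVec_zero, eq_comm]

lemma mulVec_dotProduct_inv_transpose_mulVec (x y : ι → K) :
    ((g : Matrix ι ι K) *ᵥ x) ⬝ᵥ (((g⁻¹ : GL ι K) : Matrix ι ι K)ᵀ *ᵥ y) = x ⬝ᵥ y := by
  rw [dotProduct_mulVec, vecMul_transpose, mulVec_mulVec, g.inv_mul, one_mulVec]

end Matrix.GeneralLinearGroup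

end GeneralLinear

section Counting

lemma card_mul_card_fiber_of_surjective {G H F : Type*} [AddGroup G] [Fintype G] [AddMonoid H]
    [Fintype H] [DecidableEq H] [FunLike F G H] [AddMonoidHomClass F G H] {f : F}
    (hf : Function.Surjective f) (y : H) :
    Fintype.card H * #{x | f x = y} = Fintype.card G := by
  rw [← card_univ (α := G),
    card_eq_sum_card_fiberwise (f := f) (s := univ) (t := univ) fun _ _ => mem_univ _,
    Finset.sum_congr rfl fun z _ => AddMonoidHom.card_fiber_eq_of_mem_range f (hf z) (hf y),
    sum_const, card_univ, smul_eq_mul]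

lemma Matrix.dotProduct_surjective {K ι : Type*} [Field K] [Fintype ι] {u : ι → K}
    (hu : u ≠ 0) : Function.Surjective (u ⬝ᵥ · : (ι → K) → K) := by
  classical
  obtain ⟨k, hk⟩ := Function.ne_iff.mp hu
  exact fun c => ⟨Pi.single k ((u k)⁻¹ * c),
    by simp only [dotProduct_single, mul_inv_cancel_left₀ hk]⟩

lemma ncard_setOf_dotProduct_eq {K ι : Type*} [Field K] [Fintype K] [Fintype ι]
    {u : ι → K} (hu : u ≠ 0) (c : K) :
    {v : ι → K | u ⬝ᵥ v = c}.ncard = Fintype.card K ^ (Fintype.card ι - 1) := by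
  classical
  have hι : Fintype.card ι ≠ 0 := fun h => hu (funext (Fintype.card_eq_zero_iff.mp h).elim)
  have key := card_mul_card_fiber_of_surjective (f := dotProductBilin K K u)
    (dotProduct_surjective hu) c
  rw [Fintype.card_fun, ← Nat.sub_add_cancel (Nat.one_le_iff_ne_zero.mpr hι), pow_succ'] at key
  rw [Set.ncard_eq_toFinset_card', Set.toFinset_ofPred]
  exact Nat.eq_of_mul_eq_mul_left Fintype.card_pos key

lemma ncard_setOf_prod_of_forall_ne_zero {α β : Type*} [Fintype α] [Finite β] [Zero α]
    {P : α → β → Prop} {c : ℕ} (h₀ : ∀ b, ¬ P 0 b) (h : ∀ a ≠ 0, {b | P a b}.ncard = c) :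
    {p : α × β | P p.1 p.2}.ncard = (Fintype.card α - 1) * c := by
  classical
  have hfib : ∀ a ∈ univ.erase (0 : α), Nat.card {b // P a b} = c :=
    fun a ha => h a (ne_of_mem_erase ha)
  have hfib₀ : Nat.card {b // P 0 b} = 0 := by simp [h₀]
  rw [← Nat.card_coe_set_eq, Set.coe_ofPred,
    Nat.card_congr (Equiv.subtypeProdEquivSigmaSubtype P), Nat.card_sigma,
    ← Finset.sum_erase (f := fun a => Nat.card {b // P a b}) _ hfib₀, Finset.sum_congr rfl hfib,
    sum_const, card_erase_of_mem (mem_univ _), card_univ, smul_eq_mul]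

end Counting

section Pauli

variable {n : ℕ} (g h : GL (Fin n) (ZMod 2)) (p : (Fin n → ZMod 2) × (Fin n → ZMod 2))

lemma cxAct_fst : (cxAct n g p).1 = (g : Matrix (Fin n) (Fin n) (ZMod 2)) *ᵥ p.1 := rfl

lemma cxAct_snd :
    (cxAct n g p).2 = ((g⁻¹ : GL (Fin n) (ZMod 2)) : Matrix (Fin n) (Fin n) (ZMod 2))ᵀ *ᵥ p.2 :=
  rfl

@[simp] lemma cxAct_fst_eq_zero_iff : (cxAct n g p).1 = 0 ↔ p.1 = 0 :=
  g.mulVec_eq_zero_iff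

@[simp] lemma cxAct_snd_eq_zero_iff : (cxAct n g p).2 = 0 ↔ p.2 = 0 :=
  g.inv_transpose_mulVec_eq_zero_iff

@[simp] lemma cxAct_fst_dotProduct_snd : (cxAct n g p).1 ⬝ᵥ (cxAct n g p).2 = p.1 ⬝ᵥ p.2 :=
  g.mulVec_dotProduct_inv_transpose_mulVec _ _

lemma cxAct_one : cxAct n 1 p = p := by
  ext <;> simp [cxAct_fst, cxAct_snd]

lemma cxAct_mul : cxAct n (g * h) p = cxAct n g (cxAct n h p) := by
  ext <;> simp [cxAct_fst, cxAct_snd, mulVec_mulVec]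

variable {p}

lemma cxOrbit_eq_of_mem {q : (Fin n → ZMod 2) × (Fin n → ZMod 2)} (hq : q ∈ cxOrbit n p) :
    cxOrbit n q = cxOrbit n p := by
  obtain ⟨g, rfl⟩ := hq
  ext r
  constructor
  · rintro ⟨h, rfl⟩
    exact ⟨h * g, (cxAct_mul h g p).symm⟩
  · rintro ⟨h, rfl⟩
    exact ⟨h * g⁻¹, by rw [cxAct_mul, ← cxAct_mul g⁻¹, inv_mul_cancel, cxAct_one]⟩

lemma mem_cxOrbit_of_basis (b : Basis (Fin n) (ZMod 2) (Fin n → ZMod 2))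
    {x y u v : Fin n → ZMod 2} (hu : ∑ j, x j • b j = u) (hv : ∀ j, v ⬝ᵥ b j = y j) :
    (u, v) ∈ cxOrbit n (x, y) := by
  refine ⟨b.toGL, Prod.ext ?_ ?_⟩
  · simp [cxAct_fst, b.toGL_mulVec, hu]
  · refine ((b.toGL.inv_transpose_mulVec_eq_iff _ _).mpr ?_).symm
    ext
    simp [b.transpose_toGL_mulVec, hv]

lemma cxOrbit_zero_zero : cxOrbit n (0, 0) = {(0, 0)} := by
  ext p
  refine ⟨fun ⟨g, hp⟩ => by simp [hp, Prod.ext_iff], fun hp => ⟨1, by simpa [cxAct_one] using hp⟩⟩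

lemma cxOrbit_single_zero (m : ℕ) :
    cxOrbit (m + 1) (Pi.single 0 1, 0) = {p | p.1 ≠ 0 ∧ p.2 = 0} := by
  ext p
  refine ⟨fun ⟨g, hp⟩ => by simp [hp], ?_⟩
  obtain ⟨u, v⟩ := p
  rintro ⟨hu, rfl : v = 0⟩
  obtain ⟨b, hb⟩ := exists_basis_apply_zero_eq (finrank_fin_fun _) hu
  exact mem_cxOrbit_of_basis b (by simp [hb]) (by simp)

lemma cxOrbit_zero_single (m : ℕ) :
    cxOrbit (m + 1) (0, Pi.single 0 1) = {p | p.1 = 0 ∧ p.2 ≠ 0} := by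
  ext p
  refine ⟨fun ⟨g, hp⟩ => by simp [hp], ?_⟩
  obtain ⟨u, v⟩ := p
  rintro ⟨rfl : u = 0, hv⟩
  obtain ⟨w, hw⟩ := dotProduct_surjective hv 1
  obtain ⟨b, -, hb⟩ := exists_basis_apply_zero_eq_of_apply_eq_one (finrank_fin_fun _)
    (φ := dotProductBilin (ZMod 2) (ZMod 2) v) hw
  exact mem_cxOrbit_of_basis b (by simp) (by simpa using hb)

lemma cxOrbit_single_single (m : ℕ) :
    cxOrbit (m + 1) (Pi.single 0 1, Pi.single 0 1) = {p | p.1 ⬝ᵥ p.2 = 1} := by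
  ext p
  refine ⟨fun ⟨g, hp⟩ => by simp [hp], ?_⟩
  obtain ⟨u, v⟩ := p
  intro huv
  obtain ⟨b, hb₀, hb⟩ := exists_basis_apply_zero_eq_of_apply_eq_one (finrank_fin_fun _)
    (φ := dotProductBilin (ZMod 2) (ZMod 2) v) (w := u) (by simpa [dotProduct_comm] using huv)
  exact mem_cxOrbit_of_basis b (by simp [hb₀]) (by simpa using hb)

lemma cxOrbit_single_one_single_zero (m : ℕ) :
    cxOrbit (m + 2) (Pi.single 1 1, Pi.single 0 1) =
      {p | p.1 ≠ 0 ∧ p.2 ≠ 0 ∧ p.1 ⬝ᵥ p.2 = 0} := by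
  ext p
  refine ⟨fun ⟨g, hp⟩ => by simp [hp], ?_⟩
  obtain ⟨u, v⟩ := p
  rintro ⟨hu, hv, huv⟩
  obtain ⟨w, hw⟩ := dotProduct_surjective hv 1
  obtain ⟨b, -, hb₁, hb⟩ := exists_basis_apply_zero_eq_apply_one_eq (finrank_fin_fun _)
    (φ := dotProductBilin (ZMod 2) (ZMod 2) v) hw (u := u)
    (by simpa [dotProduct_comm] using huv) hu
  exact mem_cxOrbit_of_basis b (by simp [hb₁]) (by simpa using hb)

lemma cxOrbit_single_add_single (m : ℕ) :
    cxOrbit (m + 2) (Pi.single 0 1 + Pi.single 1 1, Pi.single 0 1 + Pi.single 1 1) =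
      {p | p.1 ≠ 0 ∧ p.2 ≠ 0 ∧ p.1 ⬝ᵥ p.2 = 0} := by
  have h₀₁ : (0 : Fin (m + 2)) ≠ 1 := by simp
  have hne : (Pi.single 0 1 + Pi.single 1 1 : Fin (m + 2) → ZMod 2) ≠ 0 :=
    fun h => by simpa [h₀₁] using congrFun h 0
  have hmem : (Pi.single 0 1 + Pi.single 1 1, Pi.single 0 1 + Pi.single 1 1) ∈
      cxOrbit (m + 2) (Pi.single 1 1, Pi.single 0 1) := by
    rw [cxOrbit_single_one_single_zero]
    exact ⟨hne, hne, by simp [h₀₁, h₀₁.symm, CharTwo.add_self_eq_zero]⟩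
  rw [cxOrbit_eq_of_mem hmem, cxOrbit_single_one_single_zero]

end Pauli

section OrbitSizes

variable {m : ℕ}

lemma ncard_setOf_ne_zero : {v : Fin m → ZMod 2 | v ≠ 0}.ncard = 2 ^ m - 1 := by
  rw [← Set.compl_singleton_eq, Set.ncard_compl, Set.ncard_singleton, Nat.card_eq_fintype_card,
    Fintype.card_fun, ZMod.card, Fintype.card_fin]

lemma ncard_setOf_fst_ne_zero_snd_eq_zero :
    {p : (Fin m → ZMod 2) × (Fin m → ZMod 2) | p.1 ≠ 0 ∧ p.2 = 0}.ncard = 2 ^ m - 1 := by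
  change ({v | v ≠ 0} ×ˢ {0} : Set ((Fin m → ZMod 2) × (Fin m → ZMod 2))).ncard = _
  rw [Set.ncard_prod, Set.ncard_singleton, mul_one, ncard_setOf_ne_zero]

lemma ncard_setOf_fst_eq_zero_snd_ne_zero :
    {p : (Fin m → ZMod 2) × (Fin m → ZMod 2) | p.1 = 0 ∧ p.2 ≠ 0}.ncard = 2 ^ m - 1 := by
  change ({0} ×ˢ {v | v ≠ 0} : Set ((Fin m → ZMod 2) × (Fin m → ZMod 2))).ncard = _
  rw [Set.ncard_prod, Set.ncard_singleton, one_mul, ncard_setOf_ne_zero]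

lemma ncard_setOf_dotProduct_eq_one :
    {p : (Fin m → ZMod 2) × (Fin m → ZMod 2) | p.1 ⬝ᵥ p.2 = 1}.ncard =
      2 ^ (m - 1) * (2 ^ m - 1) := by
  rw [ncard_setOf_prod_of_forall_ne_zero (by simp) fun u hu => ncard_setOf_dotProduct_eq hu 1]
  simp [mul_comm]

lemma ncard_setOf_ne_zero_ne_zero_dotProduct_eq_zero (hm : 2 ≤ m) :
    {p : (Fin m → ZMod 2) × (Fin m → ZMod 2) | p.1 ≠ 0 ∧ p.2 ≠ 0 ∧ p.1 ⬝ᵥ p.2 = 0}.ncard =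
      4 ^ m / 2 - 3 * 2 ^ (m - 1) + 1 := by
  have hfib (u : Fin m → ZMod 2) (hu : u ≠ 0) :
      {v | u ≠ 0 ∧ v ≠ 0 ∧ u ⬝ᵥ v = 0}.ncard = 2 ^ (m - 1) - 1 := by
    have : {v | u ≠ 0 ∧ v ≠ 0 ∧ u ⬝ᵥ v = 0} = {v | u ⬝ᵥ v = 0} \ {0} := by
      ext v
      simp [hu, and_comm]
    rw [this, Set.ncard_sdiff_singleton_of_mem (by simp), ncard_setOf_dotProduct_eq hu]
    simp
  rw [ncard_setOf_prod_of_forall_ne_zero (by simp) hfib]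
  obtain ⟨k, rfl⟩ := Nat.exists_eq_add_of_le hm
  simp only [Fintype.card_fun, ZMod.card, Fintype.card_fin]
  have h₄ : (4 : ℕ) ^ (2 + k) / 2 = 8 * 2 ^ k * 2 ^ k := by
    rw [show (4 : ℕ) ^ (2 + k) = 2 * (8 * 2 ^ k * 2 ^ k) by
        rw [show (4 : ℕ) = 2 ^ 2 by rfl, ← pow_mul]; ring,
      Nat.mul_div_cancel_left _ two_pos]
  rw [show 2 + k - 1 = k + 1 by omega, h₄, show 2 ^ (2 + k) = 4 * 2 ^ k by ring,
    show 2 ^ (k + 1) = 2 * 2 ^ k by ring]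
  have ht : 1 ≤ 2 ^ k := Nat.one_le_two_pow
  generalize 2 ^ k = t at ht ⊢
  zify [show 3 * (2 * t) ≤ 8 * t * t by nlinarith, show 1 ≤ 4 * t by omega,
    show 1 ≤ 2 * t by omega]
  ring

end OrbitSizes

/-- Under the conjugation action of the `n`-qubit CNOT group on the Pauli group
mod phases (`n ≥ 2`, written `n+2`), there are exactly 5 orbits, with
representatives `I = (0,0)`, `X(1) = (e₁,0)`, `Z(1) = (0,e₁)`, `Y(1) = (e₁,e₁)`,
`Y(1)Y(2) = (e₁+e₂, e₁+e₂)`, of sizes `1`, `2ⁿ−1`, `2ⁿ−1`, `2^{n−1}(2ⁿ−1)`, and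
`4ⁿ/2 − 3·2^{n−1} + 1` respectively. -/
theorem cx_orbits (n' : ℕ) :
    let n := n' + 2
    let e₁ : Fin n → ZMod 2 := Pi.single 0 1
    let e₂ : Fin n → ZMod 2 := Pi.single 1 1
    let reps : List ((Fin n → ZMod 2) × (Fin n → ZMod 2)) :=
      [(0, 0), (e₁, 0), (0, e₁), (e₁, e₁), (e₁ + e₂, e₁ + e₂)]
    -- every Pauli lies in one of the five orbits
    (∀ p : (Fin n → ZMod 2) × (Fin n → ZMod 2),
        ∃ r ∈ reps, p ∈ cxOrbit n r) ∧
    -- the five orbits are pairwise disjoint (so there are exactly 5 orbits)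
    (reps.map (cxOrbit n)).Pairwise Disjoint ∧
    -- orbit sizes
    (cxOrbit n (0, 0)).ncard = 1 ∧
    (cxOrbit n (e₁, 0)).ncard = 2 ^ n - 1 ∧
    (cxOrbit n (0, e₁)).ncard = 2 ^ n - 1 ∧
    (cxOrbit n (e₁, e₁)).ncard = 2 ^ (n - 1) * (2 ^ n - 1) ∧
    (cxOrbit n (e₁ + e₂, e₁ + e₂)).ncard = 4 ^ n / 2 - 3 * 2 ^ (n - 1) + 1 := by
  intro n e₁ e₂ reps
  simp only [reps, e₁, e₂, n, List.map_cons, List.map_nil, List.exists_mem_cons_iff,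
    List.not_mem_nil, false_and, exists_false, or_false, cxOrbit_zero_zero, cxOrbit_single_zero,
    cxOrbit_zero_single, cxOrbit_single_single, cxOrbit_single_add_single]
  refine ⟨fun p => ?_, ?_, Set.ncard_singleton _, ncard_setOf_fst_ne_zero_snd_eq_zero,
    ncard_setOf_fst_eq_zero_snd_ne_zero, ncard_setOf_dotProduct_eq_one,
    ncard_setOf_ne_zero_ne_zero_dotProduct_eq_zero (by omega)⟩
  · have hdot : p.1 ⬝ᵥ p.2 = 0 ∨ p.1 ⬝ᵥ p.2 = 1 := by
      generalize p.1 ⬝ᵥ p.2 = c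
      revert c
      decide
    simp only [Set.mem_ofPred_eq, Set.mem_singleton_iff, Prod.ext_iff]
    tauto
  · simp +contextual [List.pairwise_cons, Set.disjoint_left]
end
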